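/- In the noise-free iteration x_n ∈ argmin{(1/r)‖F(x) − y‖^r + α_n D_{ξ_{n−1}}Θ(x, x_{n−1})}, ξ_n = ξ_{n−1} − α_n^{−1} F′(x_n)* J_r(F(x_n) − y), suppose the tangential cone condition ‖F(x̂) − F(x_n) − F′(x_n)(x̂ − x_n)‖ ≤ η‖F(x̂) − F(x_n)‖ holds (0 ≤ η < 1) for a solution x̂ of F(x) = y and the iterates. Then D_{ξ_n}Θ(x̂, x_n) − D_{ξ_{n−1}}Θ(x̂, x_{n−1}) ≤ −((1−η)/α_n)‖F(x_n) − y‖^r. -/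

import Mathlib

/-!
Subtracting the subgradient inequality of `Θ` at `x_{n-1}` (evaluated at `x_n`) bounds the change
of Bregman distance by `⟨ξ_{n-1} - ξ_n, x̂ - x_n⟩ = α⁻¹ ⟨J_r(u), A(x̂ - x_n)⟩` with
`u = F(x_n) - y`. Since `F(x̂) = y`, the tangential cone condition writes `A(x̂ - x_n) = -(u + e)`
with `‖e‖ ≤ η‖u‖`, and the two defining properties of `J_r` give
`⟨J_r(u), u + e⟩ ≥ ‖u‖^r - ‖u‖^{r-1} η ‖u‖ = (1 - η)‖u‖^r`.
-/

section Bregman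

variable {X : Type*} [SeminormedAddCommGroup X] [NormedSpace ℝ X]

/-- `bregmanDist Θ ξ x z` is the paper's `D_ξ Θ(x, z)`, with `ξ ∈ ∂Θ(z)` intended. -/
def bregmanDist (Θ : X → ℝ) (ξ : StrongDual ℝ X) (x z : X) : ℝ :=
  Θ x - Θ z - ξ (x - z)

theorem bregmanDist_sub_bregmanDist_le {Θ : X → ℝ} {ξ ξ' : StrongDual ℝ X} {x z z' : X}
    (hξ' : Θ z' + ξ' (z - z') ≤ Θ z) :
    bregmanDist Θ ξ x z - bregmanDist Θ ξ' x z' ≤ (ξ' - ξ) (x - z) := by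
  have hsplit : ξ' (x - z') = ξ' (x - z) + ξ' (z - z') := by
    rw [← map_add, sub_add_sub_cancel]
  simp only [bregmanDist, sub_apply]
  linarith

end Bregman

section DualityMapping

variable {Y : Type*} [SeminormedAddCommGroup Y] [NormedSpace ℝ Y]
  {r : ℝ} {φ : StrongDual ℝ Y} {u : Y}

theorem opNorm_mul_norm_eq_rpow (hnorm : ‖φ‖ = ‖u‖ ^ (r - 1)) (hpair : φ u = ‖u‖ ^ r) :
    ‖φ‖ * ‖u‖ = ‖u‖ ^ r := by
  rcases eq_or_ne ‖u‖ 0 with hu | hu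
  · -- `0 ^ r = 1` when `r = 0`; the pairing `φ u = ‖u‖ ^ r` is what makes `‖u‖ ^ r` vanish here.
    have hbound := φ.le_opNorm u
    rw [hu, mul_zero, norm_le_zero_iff, hpair] at hbound
    rw [hbound, hu, mul_zero]
  · rw [hnorm, Real.rpow_sub_one hu, div_mul_cancel₀ _ hu]

theorem one_sub_mul_rpow_le_apply_add {η : ℝ} {e : Y} (hnorm : ‖φ‖ = ‖u‖ ^ (r - 1))
    (hpair : φ u = ‖u‖ ^ r) (he : ‖e‖ ≤ η * ‖u‖) :
    (1 - η) * ‖u‖ ^ r ≤ φ (u + e) := by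
  have hφe : -φ e ≤ η * ‖u‖ ^ r :=
    calc -φ e ≤ ‖φ‖ * ‖e‖ := (neg_le_abs _).trans (φ.le_opNorm e)
      _ ≤ ‖φ‖ * (η * ‖u‖) := mul_le_mul_of_nonneg_left he (norm_nonneg φ)
      _ = η * ‖u‖ ^ r := by rw [← opNorm_mul_norm_eq_rpow hnorm hpair]; ring
  rw [map_add, hpair]
  linarith

end DualityMapping

theorem noise_free_decrease_general {X Y : Type*} [NormedAddCommGroup X] [NormedSpace ℝ X]
    [NormedAddCommGroup Y] [NormedSpace ℝ Y]
    (r : ℝ) (Jr : Y → StrongDual ℝ Y)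
    (hJnorm : ∀ u, ‖Jr u‖ = ‖u‖ ^ (r - 1)) (hJpair : ∀ u, Jr u u = ‖u‖ ^ r)
    (Θ : X → ℝ) (F : X → Y) (y : Y)
    (α η : ℝ) (hα : 0 < α)
    (xhat xn xprev : X) (hFxhat : F xhat = y)
    (A : X →L[ℝ] Y)  -- A = F'(x_n)
    (ξn ξprev : StrongDual ℝ X)
    (hξprev : ∀ z, Θ xprev + ξprev (z - xprev) ≤ Θ z)
    (hξdef : ξn = ξprev - α⁻¹ • (Jr (F xn - y)).comp A)
    (hcone : ‖F xhat - F xn - A (xhat - xn)‖ ≤ η * ‖F xhat - F xn‖) :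
    (Θ xhat - Θ xn - ξn (xhat - xn)) - (Θ xhat - Θ xprev - ξprev (xhat - xprev))
      ≤ -((1 - η) / α) * ‖F xn - y‖ ^ r := by
  set u := F xn - y
  set e := F xhat - F xn - A (xhat - xn)
  have hAe : A (xhat - xn) = -(u + e) := by simp only [u, e, hFxhat]; abel
  have he : ‖e‖ ≤ η * ‖u‖ := by
    rw [hFxhat, norm_sub_rev y] at hcone
    exact hcone
  have hstep : (ξprev - ξn) (xhat - xn) = -(α⁻¹ * Jr u (u + e)) := by
    simp only [hξdef, sub_sub_cancel, smul_apply,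
      ContinuousLinearMap.comp_apply, hAe, map_neg, smul_eq_mul, mul_neg]
  have hJ := one_sub_mul_rpow_le_apply_add (hJnorm u) (hJpair u) he
  calc bregmanDist Θ ξn xhat xn - bregmanDist Θ ξprev xhat xprev
      ≤ (ξprev - ξn) (xhat - xn) := bregmanDist_sub_bregmanDist_le (hξprev xn)
    _ = -(α⁻¹ * Jr u (u + e)) := hstep
    _ ≤ -(α⁻¹ * ((1 - η) * ‖u‖ ^ r)) := by gcongr
    _ = -((1 - η) / α) * ‖u‖ ^ r := by ring

/-- One-step decrease of the Bregman distance in the noise-free iteration under the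
tangential cone condition. -/
theorem noise_free_decrease {X Y : Type*} [NormedAddCommGroup X] [NormedSpace ℝ X]
    [NormedAddCommGroup Y] [NormedSpace ℝ Y]
    (r : ℝ) (hr : 1 < r) (Jr : Y → StrongDual ℝ Y)
    (hJnorm : ∀ u, ‖Jr u‖ = ‖u‖ ^ (r - 1)) (hJpair : ∀ u, Jr u u = ‖u‖ ^ r)
    (Θ : X → ℝ) (F : X → Y) (y : Y)
    (α η : ℝ) (hα : 0 < α) (hη0 : 0 ≤ η) (hη1 : η < 1)
    (xhat xn xprev : X) (hFxhat : F xhat = y)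
    (A : X →L[ℝ] Y)  -- A = F'(x_n)
    (ξn ξprev : StrongDual ℝ X)
    (hξprev : ∀ z, Θ xprev + ξprev (z - xprev) ≤ Θ z)
    (hξdef : ξn = ξprev - α⁻¹ • (Jr (F xn - y)).comp A)
    (hcone : ‖F xhat - F xn - A (xhat - xn)‖ ≤ η * ‖F xhat - F xn‖) :
    (Θ xhat - Θ xn - ξn (xhat - xn)) - (Θ xhat - Θ xprev - ξprev (xhat - xprev))
      ≤ -((1 - η) / α) * ‖F xn - y‖ ^ r :=
  noise_free_decrease_general r Jr hJnorm hJpair Θ F y α η hα xhat xn xprev hFxhat A ξn ξprev hξprev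
    hξdef hcone
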